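/- arXiv:2204.03129 — 7 statements merged into one kernel-verified Lean document; each statement's English description precedes it below -/
import Mathlib

section
/- Let G be a finite group, S a normal subgroup of G, p and q distinct primes with q not dividing |S|, and P₁ a Sylow p-subgroup of S such that G = S·C_G(P₁). If G/S has a nilpotent Hall {p,q}-subgroup, then G has a nilpotent Hall {p,q}-subgroup. -/
/-- `H` is a nilpotent Hall `{p,q}`-subgroup of `G`: its order involves only the primes
`p` and `q`, its index is coprime to `pq`, and it is nilpotent. -/
def IsNilpotentHallPQSubgroup (p q : ℕ) {G : Type*} [Group G] (H : Subgroup G) : Prop :=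
  (∀ r : ℕ, r.Prime → r ∣ Nat.card H → r = p ∨ r = q) ∧
  Nat.Coprime H.index (p * q) ∧
  Group.IsNilpotent H

/-!
Write `π : G → G/S` and `P₀ ≤ S` for the image of `P₁`. In `G/S` the Sylow subgroups `P̄` and `Q̄`
of the nilpotent Hall subgroup are Sylow subgroups of `G/S` that commute. Since `G = S·C_G(P₀)`,
the centraliser `C_G(P₀)` maps onto `G/S`, and as `q ∤ |S|` a Sylow `q`-subgroup `Q` of
`C_G(P₀) ∩ π⁻¹(Q̄)` is a Sylow subgroup of `G`. The group `M = P₀·(C_G(P₀) ∩ π⁻¹(P̄))` has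
`P₀` as a normal subgroup, has `p`-power index, is normalised by `Q` and has order prime to `q`;
so `Q` fixes one of its Sylow `p`-subgroups `P`, which is Sylow in `G` and meets `S` in `P₀`.
For `x ∈ P` and `a ∈ Q` the commutator `c = x⁻¹·(a x a⁻¹)` lies in `P ∩ S = P₀`, hence commutes
with `a`; then `x⁻¹ aⁿ x = cⁿ aⁿ`, and `n = ord a` forces the `p`-element `c` to be trivial.
Thus `P` and `Q` commute, and `P ⊔ Q ≅ P × Q` is the required Hall subgroup.
-/

open Subgroup

namespace Subgroup

variable {G : Type*} [Group G]

theorem index_eq_relIndex_mul_index_map [Finite G] (N H : Subgroup G) [N.Normal] :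
    H.index = H.relIndex N * (H.map (QuotientGroup.mk' N)).index := by
  rw [index_map, QuotientGroup.ker_mk', (QuotientGroup.mk' N).range_eq_top_of_surjective
    (QuotientGroup.mk'_surjective N), index_top, mul_one]
  refine Nat.eq_of_mul_eq_mul_left (Nat.pos_of_ne_zero (N.subgroupOf H).index_ne_zero_of_finite :
    0 < N.relIndex H) ?_
  calc N.relIndex H * H.index
      = (H ⊓ N).index := by rw [← inf_relIndex_left, relIndex_mul_index inf_le_left]
    _ = H.relIndex N * N.index := by rw [← inf_relIndex_right, relIndex_mul_index inf_le_right]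
    _ = H.relIndex N * (N.relIndex H * (H ⊔ N).index) := by
      rw [← relIndex_sup_right H N, relIndex_mul_index le_sup_right]
    _ = N.relIndex H * (H.relIndex N * (H ⊔ N).index) := by ring

theorem map_inf_comap_of_map_eq_top {N : Type*} [Group N] {f : G →* N} {C : Subgroup G}
    (hC : C.map f = ⊤) (X : Subgroup N) : (C ⊓ X.comap f).map f = X := by
  refine le_antisymm (map_le_iff_le_comap.mpr inf_le_right) fun x hx => ?_
  obtain ⟨c, hc, rfl⟩ : x ∈ C.map f := hC ▸ mem_top x
  exact ⟨c, ⟨hc, hx⟩, rfl⟩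

end Subgroup

theorem eq_one_of_conj_eq_mul_of_commute {G : Type*} [Group G] {a x c : G}
    (h : x⁻¹ * a * x = c * a) (hac : Commute a c) (hcop : (orderOf c).Coprime (orderOf a)) :
    c = 1 := by
  have hpow : c ^ orderOf a = 1 := by
    have := congrArg (· ^ orderOf a) h
    rw [← inv_inv x, inv_inv x⁻¹, conj_pow, pow_orderOf_eq_one, hac.symm.mul_pow,
      pow_orderOf_eq_one] at this
    simpa using this.symm
  exact orderOf_eq_one_iff.mp (hcop.eq_one_of_dvd (orderOf_dvd_of_pow_eq_one hpow))

namespace Sylow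

variable {G : Type*} [Group G] {p : ℕ}

def ofNotDvdIndex [Finite G] [Fact p.Prime] {K : Subgroup G} (P : Sylow p K)
    (hK : ¬ p ∣ K.index) : Sylow p G :=
  (P.isPGroup'.map K.subtype).toSylow <| by
    rw [index_map_subtype]
    exact (Fact.out : p.Prime).not_dvd_mul (not_dvd_index P) hK

theorem inf_eq_map_subtype {S R : Subgroup G} (P : Sylow p S) (hR : IsPGroup p R)
    (hPR : (P : Subgroup S).map S.subtype ≤ R) : R ⊓ S = (P : Subgroup S).map S.subtype := by
  have hP : R.subgroupOf S = P :=
    P.is_maximal' hR.comap_subtype fun x hx => mem_subgroupOf.mpr (hPR ⟨x, hx, rfl⟩)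
  rw [← hP, subgroupOf_map_subtype]

theorem exists_forall_conj_mem [Finite G] [Fact p.Prime] {q : ℕ} [Fact q.Prime]
    {M Q : Subgroup G} (hQ : IsPGroup q Q) (hQM : Q ≤ normalizer (M : Set G))
    (hqM : ¬ q ∣ Nat.card M) :
    ∃ P : Sylow p M, ∀ a ∈ Q, ∀ x ∈ (P : Subgroup M).map M.subtype,
      a * x * a⁻¹ ∈ (P : Subgroup M).map M.subtype := by
  -- `Q` acts on `Sylow p M` through conjugation by `normalizer M`; a fixed point is the `P` sought.
  let Q' : Subgroup (normalizer (M : Set G)) := Q.subgroupOf _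
  obtain ⟨P, hP⟩ := (hQ.comap_subtype : IsPGroup q Q').nonempty_fixed_point_of_prime_not_dvd_card
    (Sylow p M) fun h => hqM (h.trans ((card_dvd_index default).trans (index_dvd_card _)))
  refine ⟨P, fun a ha _ ⟨x, hx, hxa⟩ => ?_⟩
  let g : Q' := ⟨⟨a, hQM ha⟩, mem_subgroupOf.mpr ha⟩
  have hgx : (g : normalizer (M : Set G)) • x ∈ ((g • P : Sylow p M) : Subgroup M) := by
    rw [Subgroup.smul_def, Sylow.pointwise_smul_def]
    exact smul_mem_pointwise_smul _ _ _ hx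
  rw [show g • P = P from hP g] at hgx
  exact ⟨_, hgx, hxa ▸ rfl⟩

end Sylow

section

variable {G : Type*} [Group G] {p q : ℕ} [hp : Fact p.Prime] [hq : Fact q.Prime]

theorem IsPGroup.eq_of_prime_dvd_card [Finite G] {H : Subgroup G} (hH : IsPGroup p H) {r : ℕ}
    (hr : r.Prime) (hdvd : r ∣ Nat.card H) : r = p := by
  obtain ⟨n, hn⟩ := IsPGroup.iff_card.mp hH
  rw [hn] at hdvd
  exact (Nat.prime_dvd_prime_iff_eq hr hp.out).mp (hr.dvd_of_dvd_pow hdvd)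

theorem IsPGroup.coprime_orderOf_of_ne (hpq : p ≠ q) {H K : Subgroup G} (hH : IsPGroup p H)
    (hK : IsPGroup q K) {x y : G} (hx : x ∈ H) (hy : y ∈ K) :
    (orderOf x).Coprime (orderOf y) := by
  obtain ⟨i, hi⟩ := IsPGroup.iff_orderOf.mp hH ⟨x, hx⟩
  obtain ⟨j, hj⟩ := IsPGroup.iff_orderOf.mp hK ⟨y, hy⟩
  rw [orderOf_mk] at hi hj
  rw [hi, hj]
  exact Nat.coprime_pow_primes _ _ hp.out hq.out hpq

theorem not_dvd_card_of_isPGroup_map [Finite G] (hpq : p ≠ q) {N : Subgroup G} [N.Normal]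
    (hN : ¬ q ∣ Nat.card N) {H : Subgroup G} (hH : IsPGroup p (H.map (QuotientGroup.mk' N))) :
    ¬ q ∣ Nat.card H := by
  intro hdvd
  obtain ⟨⟨g, hgH⟩, hg⟩ := exists_prime_orderOf_dvd_card' q hdvd
  rw [orderOf_mk] at hg
  have hcop := hH.orderOf_coprime ((Nat.coprime_primes hp.out hq.out).mpr hpq)
    ⟨QuotientGroup.mk' N g, mem_map_of_mem _ hgH⟩
  rw [orderOf_mk] at hcop
  have hgN : g ∈ N := by
    rw [← QuotientGroup.eq_one_iff, ← orderOf_eq_one_iff]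
    exact hcop.eq_one_of_dvd (hg ▸ orderOf_map_dvd _ _)
  exact hN (hg ▸ Subgroup.orderOf_dvd_natCard N hgN)

theorem IsNilpotentHallPQSubgroup.exists_commute_sylow [Finite G] (hpq : p ≠ q)
    {H : Subgroup G} (hH : IsNilpotentHallPQSubgroup p q H) :
    ∃ (P : Sylow p G) (Q : Sylow q G), ∀ x ∈ P, ∀ y ∈ Q, Commute x y := by
  obtain ⟨-, hindex, hnil⟩ := hH
  obtain ⟨P⟩ : Nonempty (Sylow p H) := inferInstance
  obtain ⟨Q⟩ : Nonempty (Sylow q H) := inferInstance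
  have hpH : ¬ p ∣ H.index := hp.out.coprime_iff_not_dvd.mp
    (Nat.Coprime.coprime_dvd_right (dvd_mul_right p q) hindex).symm
  have hqH : ¬ q ∣ H.index := hq.out.coprime_iff_not_dvd.mp
    (Nat.Coprime.coprime_dvd_right (dvd_mul_left q p) hindex).symm
  refine ⟨P.ofNotDvdIndex hpH, Q.ofNotDvdIndex hqH, ?_⟩
  rintro _ ⟨x, hx, rfl⟩ _ ⟨y, hy, rfl⟩
  exact (commute_of_normal_of_disjoint _ _ inferInstance inferInstance
    (IsPGroup.disjoint_of_ne p q hpq _ _ P.isPGroup' Q.isPGroup') x y hx hy).map H.subtype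

theorem isNilpotentHallPQSubgroup_sup [Finite G] (P : Sylow p G) (Q : Sylow q G)
    (hPQ : ∀ x ∈ P, ∀ y ∈ Q, Commute x y) :
    IsNilpotentHallPQSubgroup p q ((P : Subgroup G) ⊔ Q) := by
  let f := MonoidHom.noncommCoprod (P : Subgroup G).subtype (Q : Subgroup G).subtype
    fun x y => hPQ x x.2 y y.2
  have hf : f.range = (P : Subgroup G) ⊔ Q := by
    refine (MonoidHom.noncommCoprod_range _ _ _).trans ?_
    rw [range_subtype, range_subtype]
  refine ⟨fun r hr hdvd => ?_, ?_, ?_⟩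
  · have hPQ : r ∣ Nat.card P * Nat.card Q := by
      rw [← hf, ← Nat.card_prod] at *
      exact hdvd.trans (card_range_dvd f)
    rcases hr.dvd_mul.mp hPQ with h | h
    · exact Or.inl (P.isPGroup'.eq_of_prime_dvd_card hr h)
    · exact Or.inr (Q.isPGroup'.eq_of_prime_dvd_card hr h)
  · have hcop {s : ℕ} [hs : Fact s.Prime] (R : Sylow s G)
        (hR : (R : Subgroup G) ≤ (P : Subgroup G) ⊔ Q) :
        Nat.Coprime ((P : Subgroup G) ⊔ Q).index s :=
      Nat.coprime_comm.mp (hs.out.coprime_iff_not_dvd.mpr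
        fun h => R.not_dvd_index (h.trans (index_dvd_of_le hR)))
    exact Nat.Coprime.mul_right (hcop P le_sup_left) (hcop Q le_sup_right)
  · have := P.isPGroup'.isNilpotent
    have := Q.isPGroup'.isNilpotent
    rw [← hf]
    exact Group.nilpotent_of_surjective f.rangeRestrict f.rangeRestrict_surjective

theorem commute_of_commute_mk (hpq : p ≠ q) {N : Subgroup G} [N.Normal] {P Q : Subgroup G}
    (hP : IsPGroup p P) (hQ : IsPGroup q Q) (hQP : ∀ a ∈ Q, ∀ x ∈ P, a * x * a⁻¹ ∈ P)
    (hQN : Q ≤ centralizer ((P ⊓ N : Subgroup G) : Set G))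
    (hmk : ∀ x ∈ P, ∀ a ∈ Q, Commute (x : G ⧸ N) (a : G ⧸ N)) {x a : G} (hx : x ∈ P)
    (ha : a ∈ Q) : Commute x a := by
  have hc : x⁻¹ * (a * x * a⁻¹) ∈ P ⊓ N := by
    refine mem_inf.mpr ⟨mul_mem (inv_mem hx) (hQP a ha x hx), ?_⟩
    rw [← QuotientGroup.eq_one_iff, QuotientGroup.mk_mul, QuotientGroup.mk_inv,
      QuotientGroup.mk_mul, QuotientGroup.mk_mul, QuotientGroup.mk_inv, ← (hmk x hx a ha).eq,
      mul_inv_cancel_right, inv_mul_cancel]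
  have h1 : x⁻¹ * (a * x * a⁻¹) = 1 := eq_one_of_conj_eq_mul_of_commute (x := x)
    (by group) (mem_centralizer_iff.mp (hQN ha) _ hc).symm
    (IsPGroup.coprime_orderOf_of_ne hpq hP hQ hc.1 ha)
  exact (mul_inv_eq_iff_eq_mul.mp (inv_mul_eq_one.mp h1).symm).symm

theorem exists_sylow_le_inf_comap [Finite G] {N : Subgroup G} [N.Normal]
    (hqN : ¬ q ∣ Nat.card N) {C : Subgroup G} (hC : C.map (QuotientGroup.mk' N) = ⊤)
    (Qbar : Sylow q (G ⧸ N)) :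
    ∃ Q : Sylow q G,
      (Q : Subgroup G) ≤ C ⊓ (Qbar : Subgroup (G ⧸ N)).comap (QuotientGroup.mk' N) := by
  set CQ := C ⊓ (Qbar : Subgroup (G ⧸ N)).comap (QuotientGroup.mk' N)
  have hCQ : ¬ q ∣ CQ.index := by
    rw [index_eq_relIndex_mul_index_map N, map_inf_comap_of_map_eq_top hC]
    exact hq.out.not_dvd_mul (fun h => hqN (h.trans (relIndex_dvd_card _ _))) Qbar.not_dvd_index
  obtain ⟨Q⟩ : Nonempty (Sylow q CQ) := inferInstance
  exact ⟨Q.ofNotDvdIndex hCQ, map_subtype_le _⟩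

theorem exists_sylow_normalized_of_le_centralizer [Finite G] (hpq : p ≠ q) {S : Subgroup G}
    [S.Normal] (hqS : ¬ q ∣ Nat.card S) {P₀ : Subgroup G} (hP₀S : P₀ ≤ S) (hP₀ : IsPGroup p P₀)
    (hP₀index : ¬ p ∣ P₀.relIndex S)
    (hC : (centralizer (P₀ : Set G)).map (QuotientGroup.mk' S) = ⊤) (Pbar : Sylow p (G ⧸ S))
    {Q : Subgroup G} (hQ : IsPGroup q Q) (hQC : Q ≤ centralizer (P₀ : Set G))
    (hQPbar : Q.map (QuotientGroup.mk' S) ≤ normalizer (Pbar : Set (G ⧸ S))) :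
    ∃ P : Sylow p G, P₀ ≤ P ∧ (P : Subgroup G).map (QuotientGroup.mk' S) ≤ Pbar ∧
      ∀ a ∈ Q, ∀ x ∈ P, a * x * a⁻¹ ∈ P := by
  set π := QuotientGroup.mk' S
  set M := P₀ ⊔ (centralizer (P₀ : Set G) ⊓ (Pbar : Subgroup (G ⧸ S)).comap π)
  have hMP₀ : M ≤ normalizer (P₀ : Set G) :=
    sup_le le_normalizer (inf_le_left.trans (centralizer_le_normalizer _))
  have hMPbar : M.map π = Pbar := by
    rw [Subgroup.map_sup, map_inf_comap_of_map_eq_top hC,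
      (Subgroup.map_eq_bot_iff _).mpr ((QuotientGroup.ker_mk' S).symm ▸ hP₀S), bot_sup_eq]
  have hM : ¬ p ∣ M.index := by
    rw [index_eq_relIndex_mul_index_map S, hMPbar]
    exact hp.out.not_dvd_mul (fun h => hP₀index (h.trans (relIndex_dvd_of_le_left S le_sup_left)))
      Pbar.not_dvd_index
  have hQM : Q ≤ normalizer (M : Set G) := by
    refine le_trans (le_inf ?_ ?_) (normalizer_inf_normalizer_le_normalizer_sup _ _)
    · exact hQC.trans (centralizer_le_normalizer _)
    · refine le_trans (le_inf (hQC.trans le_normalizer) ?_) inf_normalizer_le_normalizer_inf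
      exact (map_le_iff_le_comap.mp hQPbar).trans (le_normalizer_comap π)
  obtain ⟨P, hP⟩ := Sylow.exists_forall_conj_mem (p := p) hQ hQM
    (not_dvd_card_of_isPGroup_map hpq hqS (hMPbar ▸ Pbar.isPGroup'))
  have : (P₀.subgroupOf M).Normal := (normal_subgroupOf_iff_le_normalizer le_sup_left).mpr hMP₀
  refine ⟨P.ofNotDvdIndex hM, ?_, hMPbar ▸ map_mono (map_subtype_le _), hP⟩
  exact (map_subgroupOf_eq_of_le le_sup_left).symm.trans_le (map_mono
    (IsPGroup.le_sylow_of_normal (show IsPGroup p (P₀.subgroupOf M) from hP₀.comap_subtype) P))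

theorem exists_commute_sylow_of_quotient [Finite G] (hpq : p ≠ q) {S : Subgroup G} [S.Normal]
    (hqS : ¬ q ∣ Nat.card S) (P₁ : Sylow p S)
    (hfac : S ⊔ centralizer (((P₁ : Subgroup S).map S.subtype : Subgroup G) : Set G) = ⊤)
    (Pbar : Sylow p (G ⧸ S)) (Qbar : Sylow q (G ⧸ S))
    (hcomm : ∀ x ∈ Pbar, ∀ y ∈ Qbar, Commute x y) :
    ∃ (P : Sylow p G) (Q : Sylow q G), ∀ x ∈ P, ∀ y ∈ Q, Commute x y := by
  set π := QuotientGroup.mk' S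
  set P₀ : Subgroup G := (P₁ : Subgroup S).map S.subtype
  have hC : (centralizer (P₀ : Set G)).map π = ⊤ := by
    rw [← map_top_of_surjective π (QuotientGroup.mk'_surjective S), ← hfac, Subgroup.map_sup,
      QuotientGroup.map_mk'_self, bot_sup_eq]
  have hQbar : (Qbar : Subgroup (G ⧸ S)) ≤ normalizer (Pbar : Set (G ⧸ S)) :=
    le_trans (fun y hy => mem_centralizer_iff.mpr fun x hx => (hcomm x hx y hy).eq)
      (centralizer_le_normalizer _)
  have hP₀index : ¬ p ∣ P₀.relIndex S := by
    rw [relIndex, subgroupOf, comap_map_eq_self_of_injective S.subtype_injective]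
    exact P₁.not_dvd_index
  obtain ⟨Q, hQ⟩ := exists_sylow_le_inf_comap hqS hC Qbar
  obtain ⟨P, hP₀P, hPbar, hQP⟩ := exists_sylow_normalized_of_le_centralizer hpq hqS
    (map_subtype_le _) (P₁.isPGroup'.map _) hP₀index hC Pbar Q.isPGroup' (hQ.trans inf_le_left)
    (map_le_iff_le_comap.mpr (hQ.trans (inf_le_right.trans (comap_mono hQbar))))
  exact ⟨P, Q, fun x hx a ha => commute_of_commute_mk hpq P.isPGroup' Q.isPGroup' hQP
    ((P₁.inf_eq_map_subtype P.isPGroup' hP₀P).symm ▸ hQ.trans inf_le_left)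
    (fun y hy b hb => hcomm _ (hPbar (mem_map_of_mem π hy)) _ (hQ hb).2) hx ha⟩

end

/-- If `S ⊴ G`, `q ∤ |S|`, `P₁` is a Sylow `p`-subgroup of `S` with `G = S·C_G(P₁)`,
and `G/S` has a nilpotent Hall `{p,q}`-subgroup, then so does `G`. -/
theorem nilpotentHall_of_quotient
    (G : Type*) [Group G] [Finite G] (p q : ℕ) (hp : p.Prime) (hq : q.Prime) (hpq : p ≠ q)
    (S : Subgroup G) [S.Normal] (hqS : ¬ q ∣ Nat.card S)
    (P₁ : Sylow p S)
    (hfac : S ⊔ Subgroup.centralizer (((P₁ : Subgroup S).map S.subtype : Subgroup G) : Set G) = ⊤)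
    (hquot : ∃ H : Subgroup (G ⧸ S), IsNilpotentHallPQSubgroup p q H) :
    ∃ H : Subgroup G, IsNilpotentHallPQSubgroup p q H := by
  have := Fact.mk hp
  have := Fact.mk hq
  obtain ⟨H, hH⟩ := hquot
  obtain ⟨Pbar, Qbar, hcomm⟩ := hH.exists_commute_sylow hpq
  obtain ⟨P, Q, hPQ⟩ := exists_commute_sylow_of_quotient hpq hqS P₁ hfac Pbar Qbar hcomm
  exact ⟨_, isNilpotentHallPQSubgroup_sup P Q hPQ⟩
end

section
/- Let G be a finite group, p and q distinct primes, and N a normal subgroup of G whose order is coprime to pq. If G/N has a nilpotent Hall {p,q}-subgroup, then G has a nilpotent Hall {p,q}-subgroup. -/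
lemma coprime_aux {n m p q : ℕ} (hn : Nat.Coprime n (p * q))
    (hm : ∀ r : ℕ, r.Prime → r ∣ m → r = p ∨ r = q) : Nat.Coprime n m := by
  rw [Nat.coprime_iff_gcd_eq_one]
  by_contra h
  obtain ⟨r, hr, hrd⟩ := Nat.exists_prime_and_dvd h
  have h1 : r ∣ n := hrd.trans (Nat.gcd_dvd_left _ _)
  have h2 : r ∣ m := hrd.trans (Nat.gcd_dvd_right _ _)
  have : r ∣ p * q := by
    rcases hm r hr h2 with rfl | rfl
    · exact Dvd.intro q rfl
    · exact Dvd.intro_left p rfl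
  exact hr.one_lt.ne' ((hn.coprime_dvd_right this).symm.eq_one_of_dvd h1)


/-- If `N ⊴ G` has order coprime to `pq` and `G/N` has a nilpotent Hall `{p,q}`-subgroup,
then `G` has a nilpotent Hall `{p,q}`-subgroup. -/
theorem nilpotentHall_lift_of_coprime_kernel
    (G : Type*) [Group G] [Finite G] (p q : ℕ) (hp : p.Prime) (hq : q.Prime) (hpq : p ≠ q)
    (N : Subgroup G) [N.Normal] (hN : Nat.Coprime (Nat.card N) (p * q))
    (hquot : ∃ H : Subgroup (G ⧸ N), IsNilpotentHallPQSubgroup p q H) :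
    ∃ H : Subgroup G, IsNilpotentHallPQSubgroup p q H := by
  obtain ⟨Hbar, h1, h2, h3⟩ := hquot
  set π := QuotientGroup.mk' N with hπ
  set K := Hbar.comap π with hK
  have hNK : N ≤ K := by
    have := Subgroup.ker_le_comap (f := π) Hbar
    rwa [QuotientGroup.ker_mk'] at this
  have hmem : ∀ x : K, π (K.subtype x) ∈ Hbar := fun x => x.2
  set f : K →* Hbar := (π.comp K.subtype).codRestrict Hbar hmem with hf
  have hfsurj : Function.Surjective f := by
    rintro ⟨y, hy⟩
    obtain ⟨g, rfl⟩ := QuotientGroup.mk'_surjective N y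
    exact ⟨⟨g, hy⟩, rfl⟩
  have hker : f.ker = N.subgroupOf K := by
    ext x
    simp only [hf, MonoidHom.mem_ker, MonoidHom.codRestrict_apply, MonoidHom.comp_apply,
      Subgroup.mem_subgroupOf, Subtype.ext_iff]
    exact QuotientGroup.eq_one_iff _
  -- cardinalities
  have hcardN' : Nat.card (N.subgroupOf K) = Nat.card N :=
    Nat.card_congr (Subgroup.subgroupOfEquivOfLe hNK).toEquiv
  have e1 : (K ⧸ f.ker) ≃* Hbar := QuotientGroup.quotientKerEquivOfSurjective f hfsurj
  have hindex : (N.subgroupOf K).index = Nat.card Hbar := by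
    rw [← hker, Subgroup.index_eq_card, Nat.card_congr e1.toEquiv]
  -- Schur-Zassenhaus
  have hcop : Nat.Coprime (Nat.card (N.subgroupOf K)) (N.subgroupOf K).index := by
    rw [hcardN', hindex]
    exact coprime_aux hN h1
  haveI : (N.subgroupOf K).Normal := hker ▸ f.normal_ker
  obtain ⟨H', hH'⟩ := Subgroup.exists_right_complement'_of_coprime hcop
  have hcardH' : Nat.card H' = Nat.card Hbar := by
    rw [← hH'.symm.index_eq_card]; exact hindex
  refine ⟨H'.map K.subtype, ?_, ?_, ?_⟩
  · have : Nat.card (H'.map K.subtype) = Nat.card Hbar := by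
      rw [← hcardH']
      exact (Nat.card_congr (H'.equivMapOfInjective K.subtype K.subtype_injective).toEquiv).symm
    rw [this]; exact h1
  · rw [Subgroup.index_map_subtype]
    have hKi : K.index = Hbar.index :=
      Subgroup.index_comap_of_surjective Hbar (QuotientGroup.mk'_surjective N)
    have hH'i : H'.index = Nat.card N := by
      rw [hH'.index_eq_card, hcardN']
    rw [hKi, hH'i]
    exact Nat.Coprime.mul hN h2
  · have hbij : Function.Bijective (f.comp H'.subtype) := by
      rw [Nat.bijective_iff_injective_and_card]
      constructor
      · rw [← MonoidHom.ker_eq_bot_iff]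
        ext x
        simp only [MonoidHom.mem_ker, MonoidHom.comp_apply, Subgroup.mem_bot]
        constructor
        · intro hx
          have hx1 : (x : K) ∈ f.ker := hx
          rw [hker] at hx1
          have : (x : K) ∈ N.subgroupOf K ⊓ H' := ⟨hx1, x.2⟩
          rw [hH'.disjoint.eq_bot] at this
          exact Subtype.ext (by simpa using this)
        · rintro rfl; simp
      · exact hcardH'
    have e2 : H' ≃* Hbar := MulEquiv.ofBijective _ hbij
    have : Group.IsNilpotent H' := nilpotent_of_surjective e2.symm.toMonoidHom e2.symm.surjective
    exact nilpotent_of_surjective (H'.equivMapOfInjective K.subtype K.subtype_injective).toMonoidHom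
      (H'.equivMapOfInjective K.subtype K.subtype_injective).surjective
end

section
/- Let G be a finite p-solvable group, let q ≠ p be a prime, let P be a Sylow p-subgroup of G, and let Q be a q-subgroup of G with [P,Q] = 1. Then Q ≤ O_{p'}(G). -/
/-!
Induction on `|G|`. If `O_{p'}(G) ≠ 1`, pass to `G/O_{p'}(G)`: the preimage of `O_{p'}` of the
quotient is again a normal `p'`-subgroup. Otherwise `p`-solvability provides `K = O_p(G) ≠ 1`,
and `K ≤ P`, so `Q` centralizes `K`; by induction `Q` lies in the preimage `M` of `O_{p'}(G/K)`.
Put `C = M ∩ C_G(K)` and `Z = K ∩ C`, a central subgroup of `C` whose index is prime to `p`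
because `C/Z` embeds in `O_{p'}(G/K)`. The transfer `x ↦ x ^ |C : Z|` is a homomorphism
`C → Z` whose kernel is a normal `p'`-subgroup of `G`, hence trivial; so `C = Z ≤ K`.
Then `Q ≤ K` is both a `p`-group and a `q`-group.
-/

/-- `G` is `p`-solvable: there is a subnormal series from `⊥` to `⊤` each of whose factors
is a `p`-group or a `p'`-group. -/
def IsPSolvable (p : ℕ) (G : Type*) [Group G] : Prop :=
  ∃ (n : ℕ) (s : Fin (n + 1) → Subgroup G), s 0 = ⊥ ∧ s (Fin.last n) = ⊤ ∧
    ∀ i : Fin n, s i.castSucc ≤ s i.succ ∧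
      ((s i.castSucc).subgroupOf (s i.succ)).Normal ∧
      ((∃ k : ℕ, (s i.castSucc).relIndex (s i.succ) = p ^ k) ∨
        ¬ p ∣ (s i.castSucc).relIndex (s i.succ))

/-- `O_p(G)`, the largest normal `p`-subgroup of `G`. -/
def pCore (p : ℕ) (G : Type*) [Group G] : Subgroup G :=
  ⨆ (N : Subgroup G) (_ : N.Normal) (_ : IsPGroup p N), N

/-- `O_{p'}(G)`, the largest normal `p'`-subgroup of a finite group `G`. -/
def pPrimeCore (p : ℕ) (G : Type*) [Group G] : Subgroup G :=
  ⨆ (N : Subgroup G) (_ : N.Normal) (_ : ¬ p ∣ Nat.card N), N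

open Subgroup

namespace Subgroup

variable {G G' : Type*} [Group G] [Group G']

theorem prop_iSup_normal_of_sup_closed [Finite G] {P : Subgroup G → Prop} (hbot : P ⊥)
    (hsup : ∀ N M : Subgroup G, N.Normal → M.Normal → P N → P M → P (N ⊔ M)) :
    P (⨆ (N : Subgroup G) (_ : N.Normal) (_ : P N), N) := by
  obtain ⟨M, -, ⟨hMn, hMP⟩, hmax⟩ :=
    Finite.exists_le_maximal (p := fun N : Subgroup G => N.Normal ∧ P N) ⟨normal_bot, hbot⟩
  have hle : ∀ N : Subgroup G, N.Normal → P N → N ≤ M := fun N hNn hNP =>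
    le_sup_left.trans (hmax ⟨@sup_normal _ _ N M hNn hMn, hsup N M hNn hMn hNP hMP⟩ le_sup_right)
  have hM : (⨆ (N : Subgroup G) (_ : N.Normal) (_ : P N), N) = M :=
    le_antisymm (iSup₂_le fun N hN => iSup_le (hle N hN))
      (le_iSup₂_of_le M hMn (le_iSup_of_le hMP le_rfl))
  exact hM ▸ hMP

theorem characteristic_iSup_of_map_closed {P : Subgroup G → Prop}
    (hmap : ∀ (φ : G ≃* G) (N : Subgroup G), P N → P (N.map φ.toMonoidHom)) :
    (⨆ (N : Subgroup G) (_ : N.Normal) (_ : P N), N).Characteristic := by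
  refine characteristic_iff_map_le.mpr fun φ => ?_
  simp only [Subgroup.map_iSup]
  exact iSup₂_le fun N hN => iSup_le fun hP =>
    le_iSup₂_of_le _ (hN.map _ φ.surjective) (le_iSup_of_le (hmap φ N hP) le_rfl)

theorem card_eq_relIndex_mul_card {H K : Subgroup G} (h : H ≤ K) :
    Nat.card K = H.relIndex K * Nat.card H := by
  rw [← relIndex_bot_left, ← relIndex_mul_relIndex ⊥ H K bot_le h, relIndex_bot_left, mul_comm]

theorem card_sup_dvd_of_normal (N M : Subgroup G) [M.Normal] :
    Nat.card ↥(N ⊔ M) ∣ Nat.card N * Nat.card M := by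
  rw [card_eq_relIndex_mul_card le_sup_right, relIndex_sup_right]
  exact mul_dvd_mul_right (relIndex_dvd_card M N) _

theorem relIndex_map_dvd (f : G →* G') (A B : Subgroup G) :
    (A.map f).relIndex (B.map f) ∣ A.relIndex B := by
  have hle : (A.subgroupOf B).map (f.subgroupMap B) ≤ (A.map f).subgroupOf (B.map f) := by
    rintro _ ⟨⟨a, _⟩, ha, rfl⟩
    exact ⟨a, ha, rfl⟩
  calc (A.map f).relIndex (B.map f) ∣ ((A.subgroupOf B).map (f.subgroupMap B)).index :=
        index_dvd_of_le hle
    _ ∣ A.relIndex B := index_map_dvd _ (f.subgroupMap_surjective B)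

theorem commute_of_mem_map (f : G →* G') {A B : Subgroup G}
    (h : ∀ x ∈ A, ∀ y ∈ B, Commute x y) : ∀ x ∈ A.map f, ∀ y ∈ B.map f, Commute x y := by
  rintro _ ⟨x, hx, rfl⟩ _ ⟨y, hy, rfl⟩
  exact (h x hx y hy).map f

theorem index_subgroupOf_dvd_card_of_le_comap {K C : Subgroup G} [K.Normal]
    {L : Subgroup (G ⧸ K)} (h : C ≤ L.comap (QuotientGroup.mk' K)) :
    (K.subgroupOf C).index ∣ Nat.card L := by
  have hker : ((QuotientGroup.mk' K).comp C.subtype).ker = K.subgroupOf C := by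
    ext; simp [mem_subgroupOf]
  rw [← hker, index_ker, MonoidHom.range_comp, range_subtype]
  exact card_dvd_of_le (map_le_iff_le_comap.mpr h)

theorem card_quotient_lt_card [Finite G] {K : Subgroup G} [K.Normal] (hK : K ≠ ⊥) :
    Nat.card (G ⧸ K) < Nat.card G := by
  rw [← index_eq_card, ← K.index_mul_card]
  exact lt_mul_of_one_lt_right (Nat.pos_of_ne_zero index_ne_zero_of_finite)
    (K.one_lt_card_iff_ne_bot.mpr hK)

theorem exists_monoidHom_pow_index_of_le_center {C : Type*} [Group C] {Z : Subgroup C}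
    [Z.FiniteIndex] (hZ : Z ≤ center C) : ∃ T : C →* Z, ∀ x, (T x : C) = x ^ Z.index := by
  have : IsMulCommutative Z :=
    ⟨⟨fun a b => Subtype.ext (mem_center_iff.mp (hZ b.2) a)⟩⟩
  open scoped IsMulCommutative in
  refine ⟨MonoidHom.transfer (MonoidHom.id Z), fun x => ?_⟩
  rw [MonoidHom.transfer_eq_pow (MonoidHom.id Z) x fun k g₀ hk => ?_]
  · rfl
  · have hcomm := mem_center_iff.mp (hZ hk) g₀
    calc g₀⁻¹ * x ^ k * g₀ = g₀ * (g₀⁻¹ * x ^ k * g₀) * g₀⁻¹ := by rw [hcomm]; group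
      _ = x ^ k := by group

end Subgroup

section Cores

variable {p : ℕ} {G : Type*} [Group G]

theorem le_pCore {N : Subgroup G} (hN : N.Normal) (hNp : IsPGroup p N) : N ≤ pCore p G :=
  le_iSup₂_of_le N hN (le_iSup_of_le hNp le_rfl)

theorem le_pPrimeCore {N : Subgroup G} (hN : N.Normal) (hNp : ¬ p ∣ Nat.card N) :
    N ≤ pPrimeCore p G :=
  le_iSup₂_of_le N hN (le_iSup_of_le hNp le_rfl)

instance pCore_characteristic : (pCore p G).Characteristic :=
  characteristic_iSup_of_map_closed fun _ _ hN => hN.map _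

instance pPrimeCore_characteristic : (pPrimeCore p G).Characteristic :=
  characteristic_iSup_of_map_closed fun φ N hN => by
    rwa [card_map_of_injective φ.injective]

variable [Finite G]

theorem isPGroup_pCore : IsPGroup p (pCore p G) :=
  prop_iSup_normal_of_sup_closed (P := fun N : Subgroup G => IsPGroup p N) IsPGroup.of_bot
    fun _ _ hN _ hNp hMp =>
      have := hN
      hNp.to_sup_of_normal_left hMp

theorem not_dvd_card_pPrimeCore (hp : p.Prime) : ¬ p ∣ Nat.card (pPrimeCore p G) :=
  prop_iSup_normal_of_sup_closed (P := fun N : Subgroup G => ¬ p ∣ Nat.card N)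
    (by rw [card_bot]; exact hp.not_dvd_one) fun N M _ _ hN hM h =>
      (hp.dvd_mul.mp (h.trans (card_sup_dvd_of_normal N M))).elim hN hM

theorem map_subtype_pCore_le (M : Subgroup G) [M.Normal] :
    (pCore p M).map M.subtype ≤ pCore p G :=
  le_pCore inferInstance (isPGroup_pCore.map _)

theorem map_subtype_pPrimeCore_le (hp : p.Prime) (M : Subgroup G) [M.Normal] :
    (pPrimeCore p M).map M.subtype ≤ pPrimeCore p G :=
  le_pPrimeCore inferInstance
    (by rw [card_map_of_injective M.subtype_injective]; exact not_dvd_card_pPrimeCore hp)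

end Cores

section Series

variable {p : ℕ} {G G' : Type*} [Group G] [Group G']

def IsPSolvableStep (p : ℕ) (A B : Subgroup G) : Prop :=
  A ≤ B ∧ (A.subgroupOf B).Normal ∧ ((∃ k : ℕ, A.relIndex B = p ^ k) ∨ ¬ p ∣ A.relIndex B)

theorem IsPSolvableStep.map (hp : p.Prime) (f : G →* G') {A B : Subgroup G}
    (h : IsPSolvableStep p A B) : IsPSolvableStep p (A.map f) (B.map f) := by
  obtain ⟨hAB, hnorm, hidx⟩ := h
  have hdvd := relIndex_map_dvd f A B
  refine ⟨map_mono hAB, ?_, ?_⟩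
  · rw [normal_subgroupOf_iff_le_normalizer (map_mono hAB)]
    exact (map_mono ((normal_subgroupOf_iff_le_normalizer hAB).mp hnorm)).trans
      (le_normalizer_map f)
  · rcases hidx with ⟨k, hk⟩ | hk
    · obtain ⟨j, -, hj⟩ := (Nat.dvd_prime_pow hp).mp (hk ▸ hdvd)
      exact Or.inl ⟨j, hj⟩
    · exact Or.inr fun h => hk (h.trans hdvd)

theorem IsPSolvableStep.subgroupOf {A B M : Subgroup G} (h : IsPSolvableStep p A B)
    (hBM : B ≤ M) : IsPSolvableStep p (A.subgroupOf M) (B.subgroupOf M) := by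
  obtain ⟨hAB, hnorm, hidx⟩ := h
  have hle : A.subgroupOf M ≤ B.subgroupOf M := comap_mono hAB
  refine ⟨hle, ?_, by rwa [relIndex_subgroupOf hBM]⟩
  rw [normal_subgroupOf_iff_le_normalizer hle, ← subgroupOf_normalizer_eq (hAB.trans hBM)]
  exact comap_mono ((normal_subgroupOf_iff_le_normalizer hAB).mp hnorm)

theorem IsPSolvable.of_surjective (hp : p.Prime) {f : G →* G'} (hf : Function.Surjective f)
    (h : IsPSolvable p G) : IsPSolvable p G' := by
  obtain ⟨n, s, h0, hl, hs⟩ := h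
  exact ⟨n, fun i => (s i).map f, by simp [h0], by simp [hl, map_top_of_surjective f hf],
    fun i => IsPSolvableStep.map hp f (hs i)⟩

variable [Finite G]

theorem pCore_ne_bot_or_pPrimeCore_ne_bot_of_series [Nontrivial G] (hp : p.Prime) {n : ℕ}
    {s : Fin (n + 1) → Subgroup G} (h0 : s 0 = ⊥) (hl : s (Fin.last n) = ⊤)
    (hs : ∀ i : Fin n, IsPSolvableStep p (s i.castSucc) (s i.succ)) :
    pCore p G ≠ ⊥ ∨ pPrimeCore p G ≠ ⊥ := by
  induction n generalizing G with
  | zero => exact absurd (h0.symm.trans hl) bot_ne_top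
  | succ n ih =>
    obtain ⟨-, hMn, hMidx⟩ := hs (Fin.last n)
    set M := s (Fin.last n).castSucc
    rw [Fin.succ_last, hl] at hMn hMidx
    rw [relIndex_top_right] at hMidx
    have : M.Normal := normalizer_eq_top_iff.mp
      (top_le_iff.mp ((normal_subgroupOf_iff_le_normalizer le_top).mp hMn))
    by_cases hM : M = ⊥
    · rw [hM, index_bot, ← card_top] at hMidx
      rcases hMidx with ⟨k, hk⟩ | hk
      · exact Or.inl (ne_bot_of_le_ne_bot top_ne_bot (le_pCore normal_top (IsPGroup.of_card hk)))
      · exact Or.inr (ne_bot_of_le_ne_bot top_ne_bot (le_pPrimeCore normal_top hk))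
    have : Nontrivial M := (nontrivial_iff_ne_bot M).mpr hM
    have hsM : ∀ j : Fin (n + 1), s j.castSucc ≤ M := fun j =>
        Fin.monotone_iff_le_succ.mpr (fun i => (hs i).1)
        (Fin.castSucc_le_castSucc_iff.mpr j.le_last)
    have hsub := M.subtype_injective
    rcases ih (s := fun j => (s j.castSucc).subgroupOf M) (by simp [h0]) (subgroupOf_self M)
      (fun i => by simpa using (hs i.castSucc).subgroupOf (hsM i.succ)) with h | h
    · exact Or.inl fun hG => h ((map_eq_bot_iff_of_injective _ hsub).mp
        (le_bot_iff.mp (hG ▸ map_subtype_pCore_le M)))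
    · exact Or.inr fun hG => h ((map_eq_bot_iff_of_injective _ hsub).mp
        (le_bot_iff.mp (hG ▸ map_subtype_pPrimeCore_le hp M)))

theorem IsPSolvable.pCore_ne_bot_or_pPrimeCore_ne_bot [Nontrivial G] (hp : p.Prime)
    (h : IsPSolvable p G) : pCore p G ≠ ⊥ ∨ pPrimeCore p G ≠ ⊥ :=
  let ⟨_, _, h0, hl, hs⟩ := h
  pCore_ne_bot_or_pPrimeCore_ne_bot_of_series hp h0 hl hs

end Series

section Centralizer

variable {p : ℕ} {G : Type*} [Group G] [Finite G]

theorem comap_pPrimeCore_quotient_le (hp : p.Prime) {N : Subgroup G} [N.Normal]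
    (hN : ¬ p ∣ Nat.card N) :
    (pPrimeCore p (G ⧸ N)).comap (QuotientGroup.mk' N) ≤ pPrimeCore p G := by
  set M := (pPrimeCore p (G ⧸ N)).comap (QuotientGroup.mk' N)
  have hNM : N ≤ M := fun x hx => by simp [M, (QuotientGroup.eq_one_iff x).mpr hx]
  refine le_pPrimeCore inferInstance fun hdvd => ?_
  rw [card_eq_relIndex_mul_card hNM] at hdvd
  rcases hp.dvd_mul.mp hdvd with h | h
  · exact not_dvd_card_pPrimeCore hp (h.trans (index_subgroupOf_dvd_card_of_le_comap le_rfl))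
  · exact hN h

theorem le_of_le_centralizer_of_pPrimeCore_eq_bot (hp : p.Prime) (hO : pPrimeCore p G = ⊥)
    {K C : Subgroup G} [C.Normal] (hCK : C ≤ centralizer K)
    (hidx : ¬ p ∣ (K.subgroupOf C).index) : C ≤ K := by
  set Z := K.subgroupOf C
  have hZ : Z ≤ center C := fun z hz =>
    mem_center_iff.mpr fun c => Subtype.ext (mem_centralizer_iff.mp (hCK c.2) z hz).symm
  obtain ⟨T, hT⟩ := exists_monoidHom_pow_index_of_le_center hZ
  set H := T.ker.map C.subtype
  have hmemH : ∀ x, x ∈ H ↔ x ∈ C ∧ x ^ Z.index = 1 := fun x => by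
    simp [H, MonoidHom.mem_ker, ← Subtype.val_inj, hT, and_comm]
  have hHn : H.Normal := ⟨fun x hx g => by
    rw [hmemH] at hx ⊢
    exact ⟨‹C.Normal›.conj_mem _ hx.1 g, by rw [conj_pow, hx.2]; group⟩⟩
  have hHp : ¬ p ∣ Nat.card H := fun h => by
    have := Fact.mk hp
    obtain ⟨x, hx⟩ := exists_prime_orderOf_dvd_card' p h
    exact hidx (hx ▸ orderOf_coe x ▸ orderOf_dvd_of_pow_eq_one ((hmemH x).mp x.2).2)
  have hker : T.ker = ⊥ := (map_eq_bot_iff_of_injective _ C.subtype_injective).mp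
    (le_bot_iff.mp (hO ▸ le_pPrimeCore hHn hHp))
  have hZtop : Z = ⊤ :=
    eq_top_of_le_card _ (Nat.card_le_card_of_injective T ((T.ker_eq_bot_iff).mp hker))
  exact subgroupOf_eq_top.mp hZtop

theorem comap_pPrimeCore_quotient_inf_centralizer_le (hp : p.Prime) (hO : pPrimeCore p G = ⊥)
    (K : Subgroup G) [K.Normal] :
    (pPrimeCore p (G ⧸ K)).comap (QuotientGroup.mk' K) ⊓ centralizer K ≤ K :=
  le_of_le_centralizer_of_pPrimeCore_eq_bot hp hO inf_le_right fun h =>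
    not_dvd_card_pPrimeCore hp (h.trans (index_subgroupOf_dvd_card_of_le_comap inf_le_left))

end Centralizer

/-- If `G` is finite `p`-solvable, `P ∈ Syl_p(G)`, and `Q` is a `q`-subgroup (`q ≠ p`)
with `[P,Q] = 1`, then `Q ≤ O_{p'}(G)`. -/
theorem q_subgroup_le_pPrimeCore_of_centralizes_sylow
    (G : Type*) [Group G] [Finite G] (p q : ℕ) (hp : p.Prime) (hq : q.Prime) (hpq : q ≠ p)
    (hsolv : IsPSolvable p G) (P : Sylow p G) (Q : Subgroup G) (hQ : IsPGroup q Q)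
    (hcomm : ∀ x ∈ (P : Subgroup G), ∀ y ∈ Q, Commute x y) :
    Q ≤ pPrimeCore p G := by
  induction h : Nat.card G using Nat.strong_induction_on generalizing G with
  | _ n ih =>
  have := Fact.mk hp
  have hquot : ∀ (K : Subgroup G) [K.Normal], K ≠ ⊥ →
      Q ≤ (pPrimeCore p (G ⧸ K)).comap (QuotientGroup.mk' K) := by
    intro K _ hK
    have hsurj := QuotientGroup.mk'_surjective K
    rw [← map_le_iff_le_comap]
    refine ih _ (h ▸ card_quotient_lt_card hK) (G ⧸ K) (hsolv.of_surjective hp hsurj)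
      (P.mapSurjective hsurj) _ (hQ.map _) ?_ rfl
    rw [Sylow.coe_mapSurjective]
    exact commute_of_mem_map _ hcomm
  by_cases hO : pPrimeCore p G = ⊥
  · rcases subsingleton_or_nontrivial G with _ | _
    · exact (Subsingleton.elim Q _).le
    have hK : pCore p G ≠ ⊥ :=
      (hsolv.pCore_ne_bot_or_pPrimeCore_ne_bot hp).resolve_right (not_not.mpr hO)
    have := Fact.mk hq
    have hQC : Q ≤ centralizer (pCore p G) := fun y hy => mem_centralizer_iff.mpr fun x hx =>
      (hcomm x (isPGroup_pCore.le_sylow_of_normal P hx) y hy).eq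
    have hQK : Q ≤ pCore p G :=
      (le_inf (hquot _ hK) hQC).trans (comap_pPrimeCore_quotient_inf_centralizer_le hp hO _)
    have hQbot : Q = ⊥ :=
      disjoint_self.mp ((IsPGroup.disjoint_of_ne q p hpq _ _ hQ isPGroup_pCore).mono_right hQK)
    exact hQbot ▸ bot_le
  · exact (hquot _ hO).trans (comap_pPrimeCore_quotient_le hp (not_dvd_card_pPrimeCore hp))
end

section
/- Let G be a finite group, N a normal subgroup of G, p a prime, and P a Sylow p-subgroup of N. Then H = N·C_G(P) is a normal subgroup of G. -/
open scoped Pointwise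

/-- If `N ⊴ G` and `P` is a Sylow `p`-subgroup of `N`, then `N·C_G(P)` is normal in `G`. -/
theorem prod_centralizer_sylow_normal
    (G : Type*) [Group G] [Finite G] (p : ℕ) (hp : p.Prime)
    (N : Subgroup G) [N.Normal] (P : Sylow p N) :
    (N ⊔ Subgroup.centralizer (((P : Subgroup N).map N.subtype : Subgroup G) : Set G)).Normal := by
  haveI : Fact p.Prime := ⟨hp⟩
  set P' : Subgroup G := (P : Subgroup N).map N.subtype with hP'
  set C : Subgroup G := Subgroup.centralizer (P' : Set G) with hC
  rw [← Subgroup.normalizer_eq_top_iff, eq_top_iff, ← Sylow.normalizer_sup_eq_top P]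
  refine sup_le ?_ (le_sup_left.trans Subgroup.le_normalizer)
  intro m hm
  rw [Subgroup.mem_normalizer_iff] at hm ⊢
  have key : ∀ m : G, (∀ y : G, y ∈ P' ↔ m * y * m⁻¹ ∈ P') →
      ∀ x ∈ N ⊔ C, m * x * m⁻¹ ∈ N ⊔ C := by
    intro m hm x hx
    have hx' : x ∈ ((N : Set G) * (C : Set G)) := by
      rw [← Subgroup.normal_mul]; exact hx
    obtain ⟨n, hn, c, hc, rfl⟩ := hx'
    have h1 : m * n * m⁻¹ ∈ N := Subgroup.Normal.conj_mem ‹N.Normal› n hn m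
    have h2 : m * c * m⁻¹ ∈ C := by
      rw [hC, Subgroup.mem_centralizer_iff]
      intro y hy
      have e : m * (m⁻¹ * y * m) * m⁻¹ = y := by group
      have h := hm (m⁻¹ * y * m)
      rw [e] at h
      have hy' : m⁻¹ * y * m ∈ P' := h.mpr hy
      have hcomm : (m⁻¹ * y * m) * c = c * (m⁻¹ * y * m) :=
        (Subgroup.mem_centralizer_iff.mp hc) _ hy'
      calc y * (m * c * m⁻¹) = m * ((m⁻¹ * y * m) * c) * m⁻¹ := by group
        _ = m * (c * (m⁻¹ * y * m)) * m⁻¹ := by rw [hcomm]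
        _ = m * c * m⁻¹ * y := by group
    have hmem : (m * n * m⁻¹) * (m * c * m⁻¹) ∈ N ⊔ C :=
      Subgroup.mul_mem _ (Subgroup.mem_sup_left h1) (Subgroup.mem_sup_right h2)
    have e2 : (m * n * m⁻¹) * (m * c * m⁻¹) = m * (n * c) * m⁻¹ := by group
    rwa [e2] at hmem
  intro x
  constructor
  · exact key m hm x
  · intro hx
    have hm' : ∀ y : G, y ∈ P' ↔ m⁻¹ * y * m⁻¹⁻¹ ∈ P' := by
      intro y
      have e : m * (m⁻¹ * y * m) * m⁻¹ = y := by group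
      have h := hm (m⁻¹ * y * m)
      rw [e] at h
      rw [inv_inv]
      exact h.symm
    have := key m⁻¹ hm' _ hx
    have e : m⁻¹ * (m * x * m⁻¹) * m⁻¹⁻¹ = x := by group
    rwa [e] at this
end

section
/- Let G be a finite group and K a minimal normal subgroup of G which is a direct product K = S₁ × ⋯ × S_t of G-conjugates of a nonabelian simple group S = S₁. Let p be a prime dividing |S| and let P be a Sylow p-subgroup of K. If G = K·C_G(P), then t = 1, i.e. K = S is simple. -/
/-! Since the factors commute pairwise, `K` normalizes `S₁`, so `S₁ ∩ K` is a normal subgroup of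
`K` of order divisible by `p` and therefore meets the Sylow subgroup `P` in some `b ≠ 1`. If `x`
centralizes `P`, then `S₁^x` is a simple subgroup of `K` containing `b^x = b`; as `K` normalizes
`S₁`, the subgroup `S₁^x ∩ S₁` is normal and nontrivial in `S₁^x`, so `S₁^x = S₁`. Hence both `K`
and `C_G(P)` normalize `S₁`, which is therefore normal in `G = K·C_G(P)`; minimality gives
`S₁ = K`, and independence of the factors leaves no room for a second one. -/

open Subgroup

theorem iSupIndep.eq_of_le {α ι : Type*} [CompleteLattice α] {S : ι → α} (h : iSupIndep S)
    {i j : ι} (hi : S i ≠ ⊥) (hij : S i ≤ S j) : i = j := by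
  by_contra hne
  exact hi ((h.pairwiseDisjoint hne).eq_bot_of_le hij)

section

variable {G : Type*} [Group G]

theorem iSup_le_normalizer_of_pairwise_commute {ι : Type*} (S : ι → Subgroup G)
    (hcomm : ∀ i j, i ≠ j → ∀ x ∈ S i, ∀ y ∈ S j, Commute x y) (j : ι) :
    ⨆ i, S i ≤ normalizer (S j : Set G) := by
  refine iSup_le fun i => ?_
  by_cases hij : i = j
  · exact hij ▸ le_normalizer
  · refine le_trans (fun x hx => ?_) (centralizer_le_normalizer _)
    exact mem_centralizer_iff.mpr fun y hy => (hcomm i j hij x hx y hy).eq.symm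

theorem le_of_le_normalizer_of_inf_ne_bot {H T : Subgroup G} [IsSimpleGroup T]
    (hT : T ≤ normalizer (H : Set G)) (hTH : T ⊓ H ≠ ⊥) : T ≤ H := by
  rcases (normal_subgroupOf_of_le_normalizer hT).eq_bot_or_eq_top with hbot | htop
  · exact absurd (disjoint_iff.mp (disjoint_comm.mp (subgroupOf_eq_bot.mp hbot))) hTH
  · exact subgroupOf_eq_top.mp htop

theorem mem_normalizer_of_map_conj_le {H : Subgroup G} [Finite H] {x : G}
    (hx : H.map (MulAut.conj x).toMonoidHom ≤ H) : x ∈ normalizer (H : Set G) := by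
  rw [mem_normalizer_iff_map_conj_eq]
  refine eq_of_le_of_card_ge hx ?_
  rw [card_map_of_injective (MulAut.conj x).injective]

theorem Sylow.exists_ne_one_mem_inf_of_normal [Finite G] {p : ℕ} [Fact p.Prime] (P : Sylow p G)
    {N : Subgroup G} [N.Normal] (hN : p ∣ Nat.card N) : ∃ b ∈ N ⊓ P, b ≠ 1 := by
  obtain ⟨a, ha⟩ := exists_prime_orderOf_dvd_card' p hN
  have hpa : IsPGroup p (zpowers (a : G)) :=
    IsPGroup.of_card (n := 1) (by rw [Nat.card_zpowers, orderOf_coe, ha, pow_one])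
  obtain ⟨Q, hQ⟩ := hpa.exists_le_sylow
  obtain ⟨g, rfl⟩ := MulAction.exists_smul_eq G Q P
  refine ⟨g * a * g⁻¹, ⟨Normal.conj_mem ‹_› _ a.2 g, ?_⟩, ?_⟩
  · exact Subgroup.smul_mem_pointwise_smul _ (MulAut.conj g) _ (hQ (mem_zpowers _))
  · rw [Ne, conj_eq_one_iff, OneMemClass.coe_eq_one, ← orderOf_eq_one_iff, ha]
    exact (Fact.out : p.Prime).ne_one

theorem mem_normalizer_of_commute_of_mem [Finite G] {H K : Subgroup G} [IsSimpleGroup H]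
    [K.Normal] (hHK : H ≤ K) (hK : K ≤ normalizer (H : Set G)) {b x : G} (hb : b ∈ H)
    (hb1 : b ≠ 1) (hx : Commute x b) : x ∈ normalizer (H : Set G) := by
  set T := H.map (MulAut.conj x).toMonoidHom
  have : IsSimpleGroup T :=
    (equivMapOfInjective H _ (MulAut.conj x).injective).symm.isSimpleGroup
  have hTK : T ≤ K := (map_mono hHK).trans (Normal.map_conj_eq K x).le
  have hbT : b ∈ T := ⟨b, hb, by simp [hx.eq]⟩
  have hTH : T ⊓ H ≠ ⊥ := fun h => hb1 (by simpa [h] using mem_inf.mpr ⟨hbT, hb⟩)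
  exact mem_normalizer_of_map_conj_le (le_of_le_normalizer_of_inf_ne_bot (hTK.trans hK) hTH)

end

theorem minimal_normal_simple_of_factorization_general
    (G : Type*) [Group G] [Finite G] (p : ℕ) (hp : p.Prime)
    (K : Subgroup G) [K.Normal]
    (hmin : ∀ N : Subgroup G, N.Normal → N ≤ K → N = ⊥ ∨ N = K)
    (t : ℕ) (ht : 0 < t) (S : Fin t → Subgroup G)
    (hsimple : IsSimpleGroup (S ⟨0, ht⟩))
    (hconj : ∀ i : Fin t, ∃ g : G, S i = (S ⟨0, ht⟩).map (MulAut.conj g).toMonoidHom)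
    (hsup : (⨆ i, S i) = K)
    (hindep : iSupIndep S)
    (hcomm : ∀ i j : Fin t, i ≠ j → ∀ x ∈ S i, ∀ y ∈ S j, Commute x y)
    (hpS : p ∣ Nat.card (S ⟨0, ht⟩))
    (P : Sylow p K)
    (hfac : K ⊔ Subgroup.centralizer (((P : Subgroup K).map K.subtype : Subgroup G) : Set G) = ⊤) :
    t = 1 := by
  have := Fact.mk hp
  set S₀ := S ⟨0, ht⟩
  have hSK : ∀ i, S i ≤ K := fun i => hsup ▸ le_iSup S i
  have hKS₀ : K ≤ normalizer (S₀ : Set G) :=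
    hsup ▸ iSup_le_normalizer_of_pairwise_commute S hcomm _
  have : (S₀.subgroupOf K).Normal := normal_subgroupOf_of_le_normalizer hKS₀
  obtain ⟨b, ⟨hbS₀, hbP⟩, hb1⟩ := P.exists_ne_one_mem_inf_of_normal (N := S₀.subgroupOf K)
    (hpS.trans (Nat.card_congr (subgroupOfEquivOfLe (hSK _)).toEquiv).symm.dvd)
  have hCS₀ :
      centralizer ((P : Subgroup K).map K.subtype : Set G) ≤ normalizer (S₀ : Set G) :=
    fun x hx => mem_normalizer_of_commute_of_mem (hSK _) hKS₀ hbS₀ (by simpa using hb1)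
      (hx b (mem_map_of_mem _ hbP)).symm
  have hS₀ : S₀.Normal := normalizer_eq_top_iff.mp (top_le_iff.mp (hfac ▸ sup_le hKS₀ hCS₀))
  have hS₀K : S₀ = K :=
    (hmin S₀ hS₀ (hSK _)).resolve_left ((nontrivial_iff_ne_bot _).mp inferInstance)
  have hS_ne_bot : ∀ i, S i ≠ ⊥ := fun i => by
    obtain ⟨g, hg⟩ := hconj i
    rw [hg, Ne, map_eq_bot_iff_of_injective _ (MulAut.conj g).injective]
    exact (nontrivial_iff_ne_bot _).mp inferInstance
  have hall : ∀ i : Fin t, i = ⟨0, ht⟩ := fun i =>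
    hindep.eq_of_le (hS_ne_bot i) ((hSK i).trans hS₀K.ge)
  have : t ≤ 1 := by
    simpa using Fintype.card_le_one_iff.mpr fun i j => (hall i).trans (hall j).symm
  omega

/-- If `K` is a minimal normal subgroup of the finite group `G` which is the internal direct
product of subgroups `S 0, …, S (t-1)`, pairwise-distinct `G`-conjugates of the nonabelian
simple group `S 0`, `p` divides `|S 0|`, `P` is a Sylow `p`-subgroup of `K`, and
`G = K·C_G(P)`, then `t = 1`. -/
theorem minimal_normal_simple_of_factorization
    (G : Type*) [Group G] [Finite G] (p : ℕ) (hp : p.Prime)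
    (K : Subgroup G) [K.Normal] (hKbot : K ≠ ⊥)
    (hmin : ∀ N : Subgroup G, N.Normal → N ≤ K → N = ⊥ ∨ N = K)
    (t : ℕ) (ht : 0 < t) (S : Fin t → Subgroup G)
    (hsimple : IsSimpleGroup (S ⟨0, ht⟩))
    (hnonab : ¬ ∀ x y : (S ⟨0, ht⟩), x * y = y * x)
    (hconj : ∀ i : Fin t, ∃ g : G, S i = (S ⟨0, ht⟩).map (MulAut.conj g).toMonoidHom)
    (hdistinct : Function.Injective S)
    (hsup : (⨆ i, S i) = K)
    (hindep : iSupIndep S)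
    (hcomm : ∀ i j : Fin t, i ≠ j → ∀ x ∈ S i, ∀ y ∈ S j, Commute x y)
    (hpS : p ∣ Nat.card (S ⟨0, ht⟩))
    (P : Sylow p K)
    (hfac : K ⊔ Subgroup.centralizer (((P : Subgroup K).map K.subtype : Subgroup G) : Set G) = ⊤) :
    t = 1 :=
  minimal_normal_simple_of_factorization_general G p hp K hmin t ht S hsimple hconj hsup hindep
    hcomm hpS P hfac
end

section
/- Let q be an odd integer and d a positive integer. Then Φ_d(q) is even if and only if d is a power of 2 (including d = 1 = 2^0). -/
lemma even_eval_one_cyclotomic_iff (d : ℕ) (hd : 0 < d) :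
    Even ((Polynomial.cyclotomic d ℤ).eval 1) ↔ ∃ k : ℕ, d = 2 ^ k := by
  constructor
  · intro h
    by_contra hc
    push_neg at hc
    by_cases hpp : ∃ (p k : ℕ), p.Prime ∧ d = p ^ (k + 1)
    · obtain ⟨p, k, hp, rfl⟩ := hpp
      haveI : Fact p.Prime := ⟨hp⟩
      rw [Polynomial.eval_one_cyclotomic_prime_pow] at h
      have hp2 : p ≠ 2 := fun h2 => hc (k + 1) (by rw [h2])
      have : Odd (p : ℤ) := by
        exact_mod_cast hp.odd_of_ne_two hp2
      exact (Int.not_even_iff_odd.mpr this) h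
    · push_neg at hpp
      have : (Polynomial.cyclotomic d ℤ).eval 1 = 1 := by
        apply Polynomial.eval_one_cyclotomic_not_prime_pow
        intro p hp k hk
        rcases k with _ | k
        · simp at hk
          exact hc 0 (by simp [← hk])
        · exact hpp p k hp hk.symm
      rw [this] at h
      exact (by decide : ¬ Even (1 : ℤ)) h
  · rintro ⟨k, rfl⟩
    rcases k with _ | k
    · simp [Polynomial.cyclotomic_one]
    · haveI : Fact (Nat.Prime 2) := ⟨Nat.prime_two⟩
      rw [Polynomial.eval_one_cyclotomic_prime_pow]
      exact ⟨1, by norm_num⟩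

/-- For an odd integer `q` and a positive integer `d`, the value `Φ_d(q)` of the `d`-th
cyclotomic polynomial is even iff `d` is a power of `2`. -/
theorem cyclotomic_even_iff_pow_two
    (q : ℤ) (hq : Odd q) (d : ℕ) (hd : 0 < d) :
    Even ((Polynomial.cyclotomic d ℤ).eval q) ↔ ∃ k : ℕ, d = 2 ^ k := by
  have key : ∀ x : ℤ, (x : ZMod 2) = 1 →
      (Even ((Polynomial.cyclotomic d ℤ).eval x) ↔
        Polynomial.eval (1 : ZMod 2) (Polynomial.cyclotomic d (ZMod 2)) = 0) := by
    intro x hx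
    rw [even_iff_two_dvd, show (2:ℤ) = ((2:ℕ):ℤ) from rfl, ← ZMod.intCast_zmod_eq_zero_iff_dvd,
      ← Polynomial.map_cyclotomic_int d (ZMod 2), ← hx,
      Polynomial.eval_intCast_map, Int.coe_castRingHom]
    simp
  have hq2 : ((q : ZMod 2)) = 1 := by
    obtain ⟨k, rfl⟩ := hq
    push_cast
    rw [show ((2:ZMod 2)) = 0 from rfl]; ring
  rw [key q hq2, ← key 1 (by norm_num)]
  exact even_eval_one_cyclotomic_iff d hd
end

section
/- Let G be a finite group, N a normal subgroup with G/N abelian, and χ an irreducible character of N that extends to an irreducible character χ̂ of G. Then every irreducible character of G lying over χ is of the form χ̂·β for a linear character β of G/N; in particular every irreducible character of G lying over χ has degree χ(1). -/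
/-!
Pair `ψ` with the twists `χ̂·φ`, `φ` running over the linear characters of the abelian group
`G/N`. Summed over all `φ`, column orthogonality for `G/N` kills every term with `g ∉ N`, so
`∑_φ ⟨χ̂·φ, ψ⟩_G` is a nonzero multiple of `⟨χ̂|_N, ψ|_N⟩_N = ⟨χ, ψ|_N⟩_N ≠ 0`. Hence
`⟨χ̂·φ, ψ⟩_G ≠ 0` for some `φ`; as `χ̂·φ` is again irreducible (its norm is that of `χ̂`),
`ψ = χ̂·φ`.
-/

open CategoryTheory Module Polynomial

universe u

theorem LinearMap.trace_eq_sum_mul_finrank_of_isInternal {K V ι : Type*} [Field K]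
    [DecidableEq ι] [AddCommGroup V] [Module K V] [FiniteDimensional K V]
    {N : ι → Submodule K V} (h : DirectSum.IsInternal N) (hN : {i | N i ≠ ⊥}.Finite)
    {f : Module.End K V} (c : ι → K) (hf : ∀ i, ∀ x ∈ N i, f x = c i • x) :
    LinearMap.trace K V f = ∑ i ∈ hN.toFinset, c i * finrank K (N i) := by
  have hmaps : ∀ i, Set.MapsTo f (N i) (N i) := fun i x hx => by
    rw [SetLike.mem_coe, hf i x hx]
    exact (N i).smul_mem _ hx
  rw [LinearMap.trace_eq_sum_trace_restrict' h hN hmaps]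
  refine Finset.sum_congr rfl fun i _ => ?_
  have hres : f.restrict (hmaps i) = c i • LinearMap.id := by
    ext x
    exact (LinearMap.coe_restrict_apply (hmaps i) x).trans (hf i x x.2)
  rw [hres, map_smul, LinearMap.trace_id, smul_eq_mul]

/-- `f` is diagonalisable because `X ^ n - 1` is separable; on its `μ`-eigenspace the inverse
`f'` acts by `μ⁻¹`, which is `conj μ` since `μ` is a root of unity. -/
theorem LinearMap.conj_trace_eq_trace_of_pow_eq_one {V : Type*} [AddCommGroup V] [Module ℂ V]
    [FiniteDimensional ℂ V] {f f' : Module.End ℂ V} {n : ℕ} (hn : n ≠ 0) (hf : f ^ n = 1)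
    (hf' : f' * f = 1) :
    starRingEnd ℂ (LinearMap.trace ℂ V f) = LinearMap.trace ℂ V f' := by
  classical
  have hss : f.IsSemisimple := by
    refine Module.End.isSemisimple_of_squarefree_aeval_eq_zero
      ((X_pow_sub_one_separable_iff.mpr (by exact_mod_cast hn)).squarefree) ?_
    simp [hf]
  have hint : DirectSum.IsInternal f.eigenspace :=
    DirectSum.isInternal_submodule_of_iSupIndep_of_iSup_eq_top f.eigenspaces_iSupIndep
      hss.iSup_eigenspace_eq_top
  have hfin : {μ | f.eigenspace μ ≠ ⊥}.Finite := f.finite_hasEigenvalue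
  have hf'_apply : ∀ μ, ∀ x ∈ f.eigenspace μ, f' x = μ⁻¹ • x := fun μ x hx => by
    have hx' : x = μ • f' x := by
      rw [← map_smul, ← Module.End.mem_eigenspace_iff.mp hx, ← Module.End.mul_apply, hf',
        Module.End.one_apply]
    rcases eq_or_ne μ 0 with rfl | hμ
    · rw [zero_smul] at hx'
      simp [hx']
    · rw [hx', inv_smul_smul₀ hμ, ← hx']
  rw [LinearMap.trace_eq_sum_mul_finrank_of_isInternal hint hfin (fun μ => μ)
      fun μ x hx => Module.End.mem_eigenspace_iff.mp hx,
    LinearMap.trace_eq_sum_mul_finrank_of_isInternal hint hfin _ hf'_apply, map_sum]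
  refine Finset.sum_congr rfl fun μ hμ => ?_
  have hμn : μ ^ n = 1 := by
    have hμ' : f.HasEigenvalue μ := hfin.mem_toFinset.mp hμ
    obtain ⟨x, hx⟩ := (hμ'.pow n).exists_hasEigenvector
    have hx1 := hx.apply_eq_smul
    rw [hf, Module.End.one_apply] at hx1
    exact smul_left_injective ℂ hx.2 (hx1.symm.trans (one_smul ℂ x).symm)
  rw [map_mul, map_natCast, ← Complex.inv_eq_conj (Complex.norm_eq_one_of_pow_eq_one hμn hn)]

namespace FDRep

theorem conj_char_eq_char_inv {G : Type u} [Group G] (V : FDRep ℂ G) {g : G}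
    (hg : IsOfFinOrder g) : starRingEnd ℂ (V.character g) = V.character g⁻¹ :=
  LinearMap.conj_trace_eq_trace_of_pow_eq_one hg.orderOf_pos.ne'
    (by rw [← map_pow, pow_orderOf_eq_one, map_one])
    (by rw [← map_mul, inv_mul_cancel, map_one])

variable {k G : Type u} [Field k] [Group G]

noncomputable def twist (V : FDRep k G) (β : G →* kˣ) : FDRep k G :=
  FDRep.of (V := V)
    { toFun := fun g => (β g : k) • V.ρ g
      map_one' := by simp
      map_mul' := fun g h => by simp only [map_mul, Units.val_mul, smul_mul_smul_comm] }

theorem char_twist (V : FDRep k G) (β : G →* kˣ) (g : G) :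
    (V.twist β).character g = β g * V.character g :=
  (LinearMap.trace k V).map_smul _ _

instance simple_twist [IsAlgClosed k] [CharZero k] [Fintype G] (V : FDRep k G) [Simple V]
    (β : G →* kˣ) : Simple (V.twist β) := by
  rw [simple_iff_char_is_norm_one, ← (simple_iff_char_is_norm_one V).mp ‹_›]
  refine Finset.sum_congr rfl fun g _ => ?_
  rw [char_twist, char_twist, map_inv, Units.val_inv_eq_inv_val]
  field_simp

theorem nonempty_iso_of_sum_char_mul_char_inv_ne_zero [IsAlgClosed k] [Fintype G]
    [NeZero (Nat.card G : k)] {V W : FDRep k G} [Simple V] [Simple W]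
    (h : ∑ g : G, V.character g * W.character g⁻¹ ≠ 0) : Nonempty (V ≅ W) := by
  classical
  have := invertibleOfNonzero (NeZero.ne (Nat.card G : k))
  by_contra hVW
  have h0 := char_orthonormal V W
  rw [if_neg hVW, mul_eq_zero] at h0
  exact h (h0.resolve_left (inv_ne_zero (NeZero.ne _)))

end FDRep

namespace CommGroup

variable {A R : Type*} [CommGroup A] [Finite A] [CommRing R] [IsDomain R]
  [HasEnoughRootsOfUnity R (Monoid.exponent A)] [Fintype (A →* Rˣ)]

theorem sum_monoidHom_apply_eq_zero {a : A} (ha : a ≠ 1) : ∑ φ : A →* Rˣ, (φ a : R) = 0 := by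
  obtain ⟨φ₀, hφ₀⟩ := exists_apply_ne_one_of_hasEnoughRootsOfUnity A R ha
  refine eq_zero_of_mul_eq_self_left (mt Units.val_eq_one.mp hφ₀) ?_
  simp only [Finset.mul_sum, ← Units.val_mul, ← MonoidHom.mul_apply]
  exact Fintype.sum_bijective _ (Group.mulLeft_bijective φ₀) _ _ fun _ => rfl

theorem sum_sum_mul_monoidHom_apply_eq_card_mul_sum {G : Type*} [Group G] [Fintype G]
    (π : G →* A) (N : Subgroup G) [Fintype N] (hN : π.ker = N) (f : G → R) :
    ∑ φ : A →* Rˣ, ∑ g, f g * φ (π g) = Fintype.card (A →* Rˣ) * ∑ n : N, f n := by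
  classical
  have hsum : ∀ g, ∑ φ : A →* Rˣ, f g * φ (π g) =
      if g ∈ N then Fintype.card (A →* Rˣ) * f g else 0 := by
    intro g
    rw [← Finset.mul_sum, ← hN, MonoidHom.mem_ker]
    split_ifs with hg
    · simp [hg, mul_comm]
    · rw [sum_monoidHom_apply_eq_zero hg, mul_zero]
  rw [Finset.sum_comm, Finset.mul_sum, Fintype.sum_congr _ _ hsum, ← Finset.sum_filter]
  exact Finset.sum_subtype _ (by simp) _

end CommGroup

theorem gallagher_abelian_quotient_general
    (G : Type) [Group G] [Fintype G] (N : Subgroup G) [N.Normal]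
    (habelian : ∀ a b : G ⧸ N, a * b = b * a)
    (χ : N → ℂ)
    (χhat : G → ℂ)
    (hexthat : (∃ W : FDRep ℂ G, CategoryTheory.Simple W ∧ W.character = χhat) ∧
      ∀ x : N, χhat (x : G) = χ x)
    (ψ : G → ℂ)
    (hψirr : ∃ W : FDRep ℂ G, CategoryTheory.Simple W ∧ W.character = ψ)
    (hover : (∑ᶠ n : N, ψ (n : G) * (starRingEnd ℂ) (χ n)) ≠ 0) :
    (∃ β : (G ⧸ N) →* ℂ, ∀ g : G, ψ g = χhat g * β (QuotientGroup.mk g)) ∧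
      ψ 1 = χ 1 := by
  classical
  obtain ⟨⟨W, hW, rfl⟩, hres⟩ := hexthat
  obtain ⟨Ψ, hΨ, rfl⟩ := hψirr
  let _ : CommGroup (G ⧸ N) := { QuotientGroup.Quotient.group N with mul_comm := habelian }
  let _ : Fintype ((G ⧸ N) →* ℂˣ) := Fintype.ofFinite _
  have hover' : ∑ n : N, W.character n * Ψ.character (n : G)⁻¹ ≠ 0 := by
    rw [finsum_eq_sum_of_fintype] at hover
    convert (map_ne_zero (starRingEnd ℂ)).mpr hover using 1
    rw [map_sum]
    refine Finset.sum_congr rfl fun n _ => ?_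
    rw [map_mul, Complex.conj_conj, FDRep.conj_char_eq_char_inv Ψ (isOfFinOrder_of_finite _),
      hres, mul_comm]
  obtain ⟨φ, -, hφ⟩ : ∃ φ : G ⧸ N →* ℂˣ, φ ∈ Finset.univ ∧ ∑ g : G,
      W.character g * Ψ.character g⁻¹ * (φ (QuotientGroup.mk' N g) : ℂ) ≠ 0 := by
    refine Finset.exists_ne_zero_of_sum_ne_zero ?_
    rw [CommGroup.sum_sum_mul_monoidHom_apply_eq_card_mul_sum (QuotientGroup.mk' N) N
      (QuotientGroup.ker_mk' N)]
    exact mul_ne_zero (Nat.cast_ne_zero.mpr Fintype.card_ne_zero) hover'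
  let β := φ.comp (QuotientGroup.mk' N)
  obtain ⟨e⟩ : Nonempty (W.twist β ≅ Ψ) := by
    refine FDRep.nonempty_iso_of_sum_char_mul_char_inv_ne_zero ?_
    convert hφ using 2 with g
    rw [FDRep.char_twist, MonoidHom.comp_apply]
    ring
  have hΨ_eq : ∀ g, Ψ.character g = W.character g * β g := fun g => by
    rw [← FDRep.char_iso e, FDRep.char_twist, mul_comm]
  refine ⟨⟨(Units.coeHom ℂ).comp φ, hΨ_eq⟩, ?_⟩
  rw [hΨ_eq, map_one, Units.val_one, mul_one, ← hres 1, OneMemClass.coe_one]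

/-- Gallagher's theorem for abelian quotient: if `N ⊴ G` with `G/N` abelian and the
irreducible character `χ` of `N` extends to an irreducible character `χ̂` of `G`, then
every irreducible character `ψ` of `G` lying over `χ` has the form `χ̂·β` for a linear
character `β` of `G/N`; in particular `ψ(1) = χ(1)`. -/
theorem gallagher_abelian_quotient
    (G : Type) [Group G] [Fintype G] (N : Subgroup G) [N.Normal]
    (habelian : ∀ a b : G ⧸ N, a * b = b * a)
    (χ : N → ℂ)
    (hirr : ∃ V : FDRep ℂ N, CategoryTheory.Simple V ∧ V.character = χ)
    (χhat : G → ℂ)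
    (hexthat : (∃ W : FDRep ℂ G, CategoryTheory.Simple W ∧ W.character = χhat) ∧
      ∀ x : N, χhat (x : G) = χ x)
    (ψ : G → ℂ)
    (hψirr : ∃ W : FDRep ℂ G, CategoryTheory.Simple W ∧ W.character = ψ)
    (hover : (∑ᶠ n : N, ψ (n : G) * (starRingEnd ℂ) (χ n)) ≠ 0) :
    (∃ β : (G ⧸ N) →* ℂ, ∀ g : G, ψ g = χhat g * β (QuotientGroup.mk g)) ∧
      ψ 1 = χ 1 :=
  gallagher_abelian_quotient_general G N habelian χ χhat hexthat ψ hψirr hover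
end
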